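/- Let 𝔽 be a finite field and A an associative unital 𝔽-algebra (not necessarily commutative or finite-dimensional). If a ∈ A is an element such that a² − a is nilpotent, then there exists an integer n ≥ 1 such that aⁿ is idempotent. Moreover, if a is not nilpotent, then this aⁿ is a nonzero idempotent. -/
import Mathlib

open Polynomial

lemma aux_pow_idem {A : Type*} [Monoid A] (a : A) (k d : ℕ) (hk : 1 ≤ k) (hd : 1 ≤ d)
    (h : a ^ k = a ^ (k + d)) : ∃ n, 1 ≤ n ∧ IsIdempotentElem (a ^ n) := by
  have step : ∀ m, k ≤ m → a ^ m = a ^ (m + d) := by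
    intro m hm
    obtain ⟨c, rfl⟩ := Nat.exists_eq_add_of_le hm
    calc a ^ (k + c) = a ^ k * a ^ c := by rw [pow_add]
    _ = a ^ (k + d) * a ^ c := by rw [h]
    _ = a ^ (k + c + d) := by rw [← pow_add]; ring_nf
  have iter : ∀ c m, k ≤ m → a ^ m = a ^ (m + c * d) := by
    intro c
    induction c with
    | zero => simp
    | succ c ih =>
      intro m hm
      rw [ih m hm, step (m + c * d) (le_trans hm (Nat.le_add_right _ _))]
      ring_nf
  refine ⟨k * d, Nat.one_le_iff_ne_zero.mpr (by positivity), ?_⟩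
  have hkd : k ≤ k * d := Nat.le_mul_of_pos_right k hd
  show a ^ (k * d) * a ^ (k * d) = a ^ (k * d)
  rw [← pow_add]
  exact (iter k (k * d) hkd).symm

/-- Idempotent power lifting: in an associative unital algebra `A` over a finite
field `𝔽`, if `a² - a` is nilpotent then some power `aⁿ` (with `n ≥ 1`) is
idempotent; moreover this power is nonzero when `a` is not nilpotent. -/
theorem pow_idempotent_of_proj_mod_nil {𝔽 : Type*} [Field 𝔽] [Fintype 𝔽]
    {A : Type*} [Ring A] [Algebra 𝔽 A] (a : A) (h : IsNilpotent (a ^ 2 - a)) :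
    ∃ n : ℕ, 1 ≤ n ∧ IsIdempotentElem (a ^ n) ∧ (¬ IsNilpotent a → a ^ n ≠ 0) := by
  obtain ⟨N, hN⟩ := h
  have hint : IsIntegral 𝔽 a := by
    refine ⟨(X ^ 2 - X) ^ (N + 1), (monic_X_pow_sub (degree_X_le.trans_lt (by norm_num))).pow _, ?_⟩
    show (aeval a) _ = 0
    rw [map_pow, map_sub, map_pow, aeval_X, pow_succ, hN, zero_mul]
  haveI : Module.Finite 𝔽 (Algebra.adjoin 𝔽 {a}) :=
    ⟨(Submodule.fg_top _).mpr hint.fg_adjoin_singleton⟩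
  haveI : Finite (Algebra.adjoin 𝔽 {a}) := Module.finite_of_finite 𝔽
  set b : Algebra.adjoin 𝔽 {a} := ⟨a, Algebra.self_mem_adjoin_singleton 𝔽 a⟩ with hb
  obtain ⟨i, j, hij, hpow⟩ := Finite.exists_ne_map_eq_of_infinite (fun n : ℕ => b ^ (n + 1))
  have key : a ^ (i + 1) = a ^ (j + 1) := by
    have := congrArg (Subtype.val) hpow
    simpa [hb] using this
  have main : ∃ n, 1 ≤ n ∧ IsIdempotentElem (a ^ n) := by
    rcases lt_or_gt_of_ne hij with hlt | hlt
    · refine aux_pow_idem a (i + 1) (j - i) (by omega) (by omega) ?_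
      rw [key]; congr 1; omega
    · refine aux_pow_idem a (j + 1) (i - j) (by omega) (by omega) ?_
      rw [← key]; congr 1; omega
  obtain ⟨n, hn1, hidem⟩ := main
  exact ⟨n, hn1, hidem, fun hna h0 => hna ⟨n, h0⟩⟩
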